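/- Let A be a DFA with L_A ⊆ {0,1}^N, and A⊕ the padded DFA from the construction (with chain states q'_1,...,q'_N, final state q_fin, dead transitions at depth < N redirected into the chain, and depth-N states routed to q_fin on symbol 1 and, on symbol 0, to q_fin iff accepting in A). Then L_{A⊕} = {u·b : u ∈ {0,1}^N, b ∈ {0,1}, A(u)=1 or b=1}, and A⊕ has at most |A| + N + 1 states. -/

import Mathlib

/-!
Along a word of length at most `N`, the padded automaton simulates `A` for as long as `A` avoids
its dead state; when `A` dies after `ℓ` letters, the padded automaton enters the chain at `q'_ℓ`
and walks along it, so after `N` letters it sits either in the `A`-state of the word or in `q'_N`.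
The `(N+1)`-st letter leads to `q_fin` exactly when the word is accepted by `A` or the letter
is `1`, and every further letter leads to the absorbing dead state.
-/

theorem DFA.evalFrom_eq_self_of_step_eq_self {α σ : Type*} (M : DFA α σ) {s : σ}
    (hs : ∀ a, M.step s a = s) (x : List α) : M.evalFrom s x = s := by
  induction x with
  | nil => rfl
  | cons a x ih => rw [DFA.evalFrom_cons, hs, ih]

/-- The transition structure of the padded automaton `A⊕` on `Q ⊕ Fin (N + 1)`: `Sum.inr j`
is the chain state `q'_j` for `1 ≤ j ≤ N`, and `Sum.inr 0` is `q_fin`. -/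
structure IsPadding {Q : Type} [DecidableEq Q] (N : ℕ) (M : DFA Bool Q) (qd : Q)
    (depth : Q → ℕ) [DecidablePred (· ∈ M.accept)] (M' : DFA Bool (Q ⊕ Fin (N + 1))) : Prop where
  start : M'.start = Sum.inl M.start
  accept : M'.accept = {Sum.inr (0 : Fin (N + 1))}
  step_chain : ∀ (j : Fin (N + 1)) (_ : 1 ≤ (j : ℕ)) (hjN : (j : ℕ) < N) (b : Bool),
    M'.step (Sum.inr j) b = Sum.inr ⟨(j : ℕ) + 1, Nat.succ_lt_succ hjN⟩
  step_chain_last : ∀ (j : Fin (N + 1)), (j : ℕ) = N →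
    M'.step (Sum.inr j) true = Sum.inr 0 ∧ M'.step (Sum.inr j) false = Sum.inl qd
  step_fin : ∀ b : Bool, M'.step (Sum.inr 0) b = Sum.inl qd
  step_dead : ∀ b : Bool, M'.step (Sum.inl qd) b = Sum.inl qd
  step_low : ∀ (q : Q) (_ : q ≠ qd) (hdq : depth q < N) (b : Bool),
    M'.step (Sum.inl q) b =
      if M.step q b = qd then Sum.inr ⟨depth q + 1, Nat.succ_lt_succ hdq⟩ else Sum.inl (M.step q b)
  step_high : ∀ (q : Q) (_ : q ≠ qd) (_ : depth q = N),
    M'.step (Sum.inl q) true = Sum.inr 0 ∧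
    M'.step (Sum.inl q) false =
      (if q ∈ M.accept then Sum.inr (0 : Fin (N + 1)) else Sum.inl qd)

namespace IsPadding

variable {Q : Type} [DecidableEq Q] {N : ℕ} {M : DFA Bool Q} {qd : Q} {depth : Q → ℕ}
  [DecidablePred (· ∈ M.accept)] {M' : DFA Bool (Q ⊕ Fin (N + 1))}

theorem eval_of_length_le (hP : IsPadding N M qd depth M') (hqdself : ∀ b, M.step qd b = qd)
    (hstartne : M.start ≠ qd) (hdepth : ∀ u, M.eval u ≠ qd → depth (M.eval u) = u.length)
    {u : List Bool} (hu : u.length ≤ N) :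
    M'.eval u =
      if M.eval u = qd then Sum.inr ⟨u.length, Nat.lt_succ_of_le hu⟩ else Sum.inl (M.eval u) := by
  induction u using List.reverseRecOn with
  | nil => simp [hstartne, hP.start]
  | append_singleton u b ih =>
    have hlt : u.length < N := by simp only [List.length_append, List.length_singleton] at hu; omega
    rw [DFA.eval_append_singleton, DFA.eval_append_singleton, ih hlt.le]
    by_cases hdead : M.eval u = qd
    · have hne : u ≠ [] := by rintro rfl; exact hstartne hdead
      have hpos : 1 ≤ u.length := List.length_pos_iff.mpr hne
      simp [hdead, hqdself, hP.step_chain ⟨u.length, by omega⟩ hpos hlt]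
    · have hdu := hdepth u hdead
      rw [if_neg hdead, hP.step_low _ hdead (hdu ▸ hlt)]
      split_ifs <;> simp [hdu]

theorem eval_ne_fin_of_length_le (hP : IsPadding N M qd depth M')
    (hqdself : ∀ b, M.step qd b = qd) (hstartne : M.start ≠ qd)
    (hdepth : ∀ u, M.eval u ≠ qd → depth (M.eval u) = u.length)
    {u : List Bool} (hu : u.length ≤ N) : M'.eval u ≠ Sum.inr 0 := by
  rw [hP.eval_of_length_le hqdself hstartne hdepth hu]
  split_ifs with hdead
  · have hne : u ≠ [] := by rintro rfl; exact hstartne hdead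
    simpa [Fin.ext_iff] using hne
  · exact Sum.inl_ne_inr

theorem eval_append_singleton_of_length_eq (hP : IsPadding N M qd depth M')
    (hqdself : ∀ b, M.step qd b = qd) (hqdrej : qd ∉ M.accept) (hstartne : M.start ≠ qd)
    (hdepth : ∀ u, M.eval u ≠ qd → depth (M.eval u) = u.length)
    {u : List Bool} (hu : u.length = N) (b : Bool) :
    M'.eval (u ++ [b]) = if M.eval u ∈ M.accept ∨ b = true then Sum.inr 0 else Sum.inl qd := by
  rw [DFA.eval_append_singleton, hP.eval_of_length_le hqdself hstartne hdepth hu.le]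
  by_cases hdead : M.eval u = qd
  · obtain ⟨htrue, hfalse⟩ := hP.step_chain_last ⟨u.length, by omega⟩ hu
    cases b <;> simp [hdead, hqdrej, htrue, hfalse]
  · obtain ⟨htrue, hfalse⟩ := hP.step_high _ hdead (hu ▸ hdepth u hdead)
    cases b <;> simp [hdead, htrue, hfalse]

theorem eval_append_cons_cons_of_length_eq (hP : IsPadding N M qd depth M')
    (hqdself : ∀ b, M.step qd b = qd) (hqdrej : qd ∉ M.accept) (hstartne : M.start ≠ qd)
    (hdepth : ∀ u, M.eval u ≠ qd → depth (M.eval u) = u.length)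
    {u : List Bool} (hu : u.length = N) (b c : Bool) (z : List Bool) :
    M'.eval (u ++ b :: c :: z) = Sum.inl qd := by
  rw [← List.singleton_append, ← List.append_assoc, DFA.eval, DFA.evalFrom_of_append, ← DFA.eval,
    hP.eval_append_singleton_of_length_eq hqdself hqdrej hstartne hdepth hu, DFA.evalFrom_cons]
  have hstep : M'.step (if M.eval u ∈ M.accept ∨ b = true then Sum.inr 0 else Sum.inl qd) c =
      Sum.inl qd := by
    split_ifs
    exacts [hP.step_fin c, hP.step_dead c]
  rw [hstep, M'.evalFrom_eq_self_of_step_eq_self hP.step_dead]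

theorem accepts_eq (hP : IsPadding N M qd depth M')
    (hqdself : ∀ b, M.step qd b = qd) (hqdrej : qd ∉ M.accept) (hstartne : M.start ≠ qd)
    (hdepth : ∀ u, M.eval u ≠ qd → depth (M.eval u) = u.length) :
    M'.accepts = {x : List Bool | ∃ (u : List Bool) (b : Bool),
      x = u ++ [b] ∧ u.length = N ∧ (u ∈ M.accepts ∨ b = true)} := by
  ext x
  rw [DFA.mem_accepts, hP.accept, Set.mem_singleton_iff]
  constructor
  · intro hx
    have hlong : N < x.length := by
      by_contra! hshort
      exact hP.eval_ne_fin_of_length_le hqdself hstartne hdepth hshort hx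
    obtain ⟨b, z, hz⟩ := List.exists_cons_of_ne_nil (l := x.drop N) (by simpa using hlong)
    have hsplit : x = x.take N ++ b :: z := by rw [← hz, List.take_append_drop]
    have hu : (x.take N).length = N := by simp [hlong.le]
    rcases z with _ | ⟨c, z⟩
    · refine ⟨x.take N, b, hsplit, hu, ?_⟩
      rw [hsplit, hP.eval_append_singleton_of_length_eq hqdself hqdrej hstartne hdepth hu] at hx
      split_ifs at hx with hacc
      exact hacc
    · rw [hsplit, hP.eval_append_cons_cons_of_length_eq hqdself hqdrej hstartne hdepth hu] at hx
      exact absurd hx Sum.inl_ne_inr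
  · rintro ⟨u, b, rfl, hu, hacc⟩
    rw [hP.eval_append_singleton_of_length_eq hqdself hqdrej hstartne hdepth hu]
    exact if_pos hacc

end IsPadding

/-- Correctness of the padded construction A⊕: starting from a minimal DFA A over {0,1}
with L_A ⊆ {0,1}^N (non-dead states having unique depths, given by `depth`, and with dead
state `qd`), the DFA M' on states Q ⊕ Fin (N+1) — where `Sum.inr j` for 1 ≤ j ≤ N is the
chain state q'_j and `Sum.inr 0` is the unique accepting state q_fin — defined by:
chain transitions q'_j → q'_{j+1} for j < N, q'_N → q_fin on 1 and to dead on 0, q_fin to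
dead on both symbols, dead transitions at depth < N redirected into the chain, and depth-N
states routed to q_fin on 1 and, on 0, to q_fin iff accepting in A — recognizes exactly
{u·b : u ∈ {0,1}^N, A(u)=1 or b=1}, and has at most |A| + N + 1 states. -/
theorem stmt_19 {Q : Type} [Fintype Q] [DecidableEq Q] (N : ℕ) (M : DFA Bool Q)
    (qd : Q) (hqdself : ∀ b : Bool, M.step qd b = qd) (hqdrej : qd ∉ M.accept)
    (hstartne : M.start ≠ qd)
    (depth : Q → ℕ)
    (hdepth : ∀ q : Q, q ≠ qd →
      (∃ x : List Bool, M.eval x = q) ∧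
      (∀ x : List Bool, M.eval x = q → x.length = depth q) ∧ depth q ≤ N)
    [DecidablePred (· ∈ M.accept)]
    (M' : DFA Bool (Q ⊕ Fin (N + 1)))
    (hstart : M'.start = Sum.inl M.start)
    (haccept : M'.accept = {Sum.inr (0 : Fin (N + 1))})
    (hchain : ∀ (j : Fin (N + 1)) (hj1 : 1 ≤ (j : ℕ)) (hjN : (j : ℕ) < N) (b : Bool),
      M'.step (Sum.inr j) b = Sum.inr ⟨(j : ℕ) + 1, by omega⟩)
    (hchainN : ∀ (j : Fin (N + 1)), (j : ℕ) = N →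
      M'.step (Sum.inr j) true = Sum.inr 0 ∧ M'.step (Sum.inr j) false = Sum.inl qd)
    (hfin : ∀ b : Bool, M'.step (Sum.inr 0) b = Sum.inl qd)
    (hdeadstep : ∀ b : Bool, M'.step (Sum.inl qd) b = Sum.inl qd)
    (hlow : ∀ (q : Q) (_ : q ≠ qd) (hdq : depth q < N) (b : Bool),
      M'.step (Sum.inl q) b =
        if M.step q b = qd then Sum.inr ⟨depth q + 1, by omega⟩
        else Sum.inl (M.step q b))
    (hhigh : ∀ (q : Q) (_ : q ≠ qd) (_ : depth q = N),
      M'.step (Sum.inl q) true = Sum.inr 0 ∧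
      M'.step (Sum.inl q) false =
        (if q ∈ M.accept then Sum.inr (0 : Fin (N + 1)) else Sum.inl qd)) :
    M'.accepts = {x : List Bool | ∃ (u : List Bool) (b : Bool),
        x = u ++ [b] ∧ u.length = N ∧ (u ∈ M.accepts ∨ b = true)} ∧
    Fintype.card (Q ⊕ Fin (N + 1)) ≤ Fintype.card Q + N + 1 := by
  have hP : IsPadding N M qd depth M' :=
    ⟨hstart, haccept, hchain, hchainN, hfin, hdeadstep, hlow, hhigh⟩
  have hdepth' : ∀ u, M.eval u ≠ qd → depth (M.eval u) = u.length :=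
    fun u h => ((hdepth _ h).2.1 u rfl).symm
  refine ⟨hP.accepts_eq hqdself hqdrej hstartne hdepth', ?_⟩
  simp only [Fintype.card_sum, Fintype.card_fin]
  omega
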